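/- In the stabilizer game for the eight-qubit code, if the players share a state in the code space and each player answers question D ∈ {X,Z} by measuring the Pauli operator D on their qubit, the referee accepts with probability 1; consequently the nonlocal value of the game is 1. Moreover, for any strategy with value ≥ 1 − ε and any stabilizer element P = (−1)^ν ⊗_{i=1}^8 D^{(i)} ∈ Ξ, the corresponding product of measured reflections satisfies Tr((−1)^ν (⊗_i D̂^{(i)}) ρ) ≥ 1 − 32ε. -/

import Mathlib

open Matrix ComplexOrder

/-- Pauli measurement labels: `false` stands for `X`, `true` stands for `Z`. -/
def pmat : Bool → Matrix (Fin 2) (Fin 2) ℂ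
  | false => !![0, 1; 1, 0]
  | true => !![1, 0; 0, -1]

/-- The tensor product of one operator per player, acting on the tensor product of the
eight players' spaces. -/
noncomputable def bigT {d : Fin 8 → ℕ} (A : ∀ i, Matrix (Fin (d i)) (Fin (d i)) ℂ) :
    Matrix (∀ i, Fin (d i)) (∀ i, Fin (d i)) ℂ :=
  Matrix.of fun f g => ∏ i, A i (f i) (g i)

/-- The question (`X` or `Z`) sent to player `i` for the stabilizer element of the
eight-qubit code labelled by `c` (selecting `g₁` for `false` or `g₂` for `true`) and
`μ : Fin 4 → Bool` (selecting which of `g₃,…,g₆` are multiplied in).  The eight-qubit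
code has generators `g₁ = X⊗⁸`, `g₂ = (XZ)⊗⁴`, and `g₃,…,g₆ = YY` on the four qubit
pairs; the `32` elements of `Ξ` are `g₁∏gⱼ^{μⱼ}` and `g₂∏gⱼ^{μⱼ}`, whose tensor
factors are all `X` or `Z`. -/
def quest (c : Bool) (μ : Fin 4 → Bool) (i : Fin 8) : Bool :=
  xor (c && decide ((i : ℕ) % 2 = 1)) (μ ⟨(i : ℕ) / 2, by have := i.isLt; omega⟩)

/-- The sign `(−1)^ν` of the stabilizer element of `Ξ` labelled by `(c, μ)`. -/
noncomputable def sgn (c : Bool) (μ : Fin 4 → Bool) : ℂ :=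
  if c then 1 else
    (if (Finset.univ.filter fun j => μ j = true).card % 2 = 1 then -1 else 1)

/-- The value of a strategy `(ρ, D̂)` in the stabilizer game for the eight-qubit code:
the referee picks one of the `32` elements of `Ξ` uniformly at random, sends its `i`-th
tensor factor to player `i`, and accepts iff the parity of the answers matches the
sign bit. -/
noncomputable def gameValue {d : Fin 8 → ℕ}
    (Dh : ∀ i, Bool → Matrix (Fin (d i)) (Fin (d i)) ℂ)
    (ρ : Matrix (∀ i, Fin (d i)) (∀ i, Fin (d i)) ℂ) : ℝ :=
  (32 : ℝ)⁻¹ * ∑ c : Bool, ∑ μ : Fin 4 → Bool,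
    ((((2 : ℂ)⁻¹ • ((1 : Matrix (∀ i, Fin (d i)) (∀ i, Fin (d i)) ℂ) +
        sgn c μ • bigT fun i => Dh i (quest c μ i))) * ρ).trace).re

/-! Let `δ(P) = 1 - Re Tr(P̂ ρ) ≥ 0` be the deficit of the observable `P̂ = (-1)^ν ⊗ᵢ D̂⁽ⁱ⁾`
of `P ∈ Ξ`; the value of a strategy is `1 - (∑_P δ(P)) / 64`, so value `≥ 1 - ε` means
`∑_P δ(P) ≤ 64 ε`. Within one of the two families `g₁ ∏ gⱼ^{μⱼ}`, `g₂ ∏ gⱼ^{μⱼ}`, if `α` and `β`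
are disjoint sets of the generators `g₃,…,g₆`, then the observables of `αμ`, `αβμ`, `βμ`
multiply to that of `μ`: on every qubit pair two of the three factors agree and cancel. For
isometries `1 - ABC = (1 - A) + A(1 - B) + AB(1 - C)`, and the three terms have the
`ρ`-seminorms of `1 - A`, `1 - B`, `1 - C`, whence `δ(ABC) ≤ 3 (δ(A) + δ(B) + δ(C))`. Three
such triples reach nine distinct shifts of `μ`, so `2 δ(μ)` is at most the sum of `δ` over
the family, which is `≤ 64 ε`. -/

section Expectation

variable {n : Type*} [Fintype n] [DecidableEq n]

noncomputable def expect (ρ : Matrix n n ℂ) : Matrix n n ℂ →+ ℝ :=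
  AddMonoidHom.mk' (fun X => ((X * ρ).trace).re) fun X Y => by
    rw [add_mul, trace_add, Complex.add_re]

variable {ρ : Matrix n n ℂ}

lemma expect_apply (X : Matrix n n ℂ) : expect ρ X = ((X * ρ).trace).re := rfl

lemma expect_one (hρ : ρ.trace = 1) : expect ρ 1 = 1 := by
  rw [expect_apply, one_mul, hρ, Complex.one_re]

lemma expect_conjTranspose (hρ : ρ.IsHermitian) (X : Matrix n n ℂ) :
    expect ρ Xᴴ = expect ρ X := by
  rw [expect_apply, expect_apply, ← hρ.eq, ← conjTranspose_mul, trace_conjTranspose,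
    Complex.star_def, Complex.conj_re, hρ.eq, trace_mul_comm]

lemma expect_conjTranspose_mul_self_nonneg (hρ : ρ.PosSemidef) (X : Matrix n n ℂ) :
    0 ≤ expect ρ (Xᴴ * X) := by
  have h := (hρ.mul_mul_conjTranspose_same X).trace_nonneg
  rw [trace_mul_cycle] at h
  exact (Complex.nonneg_iff.mp h).1

lemma expect_normSq_add_add_le (hρ : ρ.PosSemidef) (X Y Z : Matrix n n ℂ) :
    expect ρ ((X + Y + Z)ᴴ * (X + Y + Z)) ≤
      3 * (expect ρ (Xᴴ * X) + expect ρ (Yᴴ * Y) + expect ρ (Zᴴ * Z)) := by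
  have key : (X - Y)ᴴ * (X - Y) + (X - Z)ᴴ * (X - Z) + (Y - Z)ᴴ * (Y - Z) =
      3 • (Xᴴ * X + Yᴴ * Y + Zᴴ * Z) - (X + Y + Z)ᴴ * (X + Y + Z) := by
    simp only [conjTranspose_sub, conjTranspose_add]
    noncomm_ring
  have h := congrArg (expect ρ) key
  rw [map_add, map_add, map_sub, map_nsmul, map_add, map_add] at h
  have := expect_conjTranspose_mul_self_nonneg hρ (X - Y)
  have := expect_conjTranspose_mul_self_nonneg hρ (X - Z)
  have := expect_conjTranspose_mul_self_nonneg hρ (Y - Z)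
  simp only [nsmul_eq_mul] at h
  push_cast at h
  linarith

lemma expect_normSq_mul_left {U : Matrix n n ℂ} (hU : Uᴴ * U = 1) (X : Matrix n n ℂ) :
    expect ρ ((U * X)ᴴ * (U * X)) = expect ρ (Xᴴ * X) := by
  rw [conjTranspose_mul, mul_assoc, ← mul_assoc Uᴴ, hU, one_mul]

lemma expect_normSq_one_sub (hρ : ρ.IsHermitian) (htr : ρ.trace = 1) {U : Matrix n n ℂ}
    (hU : Uᴴ * U = 1) : expect ρ ((1 - U)ᴴ * (1 - U)) = 2 * (1 - expect ρ U) := by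
  have key : (1 - U)ᴴ * (1 - U) = 1 + 1 - U - Uᴴ := by
    rw [conjTranspose_sub, conjTranspose_one, sub_mul, mul_sub, mul_sub, hU]
    noncomm_ring
  rw [key, map_sub, map_sub, map_add, expect_conjTranspose hρ, expect_one htr]
  ring

lemma expect_le_one (hρ : ρ.PosSemidef) (htr : ρ.trace = 1) {U : Matrix n n ℂ}
    (hU : Uᴴ * U = 1) : expect ρ U ≤ 1 := by
  have := expect_conjTranspose_mul_self_nonneg hρ (1 - U)
  rw [expect_normSq_one_sub hρ.isHermitian htr hU] at this
  linarith

lemma one_sub_expect_mul_mul_le (hρ : ρ.PosSemidef) (htr : ρ.trace = 1)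
    {A B C : Matrix n n ℂ} (hA : Aᴴ * A = 1) (hB : Bᴴ * B = 1) (hC : Cᴴ * C = 1) :
    1 - expect ρ (A * B * C) ≤
      3 * ((1 - expect ρ A) + (1 - expect ρ B) + (1 - expect ρ C)) := by
  have hAB : (A * B)ᴴ * (A * B) = 1 := by
    rw [conjTranspose_mul, mul_assoc, ← mul_assoc Aᴴ, hA, one_mul, hB]
  have hABC : (A * B * C)ᴴ * (A * B * C) = 1 := by
    rw [conjTranspose_mul, mul_assoc, ← mul_assoc (A * B)ᴴ, hAB, one_mul, hC]
  have htele : 1 - A * B * C = (1 - A) + A * (1 - B) + A * B * (1 - C) := by noncomm_ring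
  have h := expect_normSq_add_add_le hρ (1 - A) (A * (1 - B)) (A * B * (1 - C))
  rw [← htele, expect_normSq_mul_left hA, expect_normSq_mul_left hAB] at h
  simp only [expect_normSq_one_sub hρ.isHermitian htr, hA, hB, hC, hABC] at h
  linarith

end Expectation

section TensorProduct

variable {d : Fin 8 → ℕ}

lemma bigT_mul (A B : ∀ i, Matrix (Fin (d i)) (Fin (d i)) ℂ) :
    bigT A * bigT B = bigT fun i => A i * B i := by
  ext f g
  simp only [bigT, mul_apply, of_apply]
  rw [Finset.prod_univ_sum (fun i => (Finset.univ : Finset (Fin (d i))))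
    (fun i j => A i (f i) j * B i j (g i)), Fintype.piFinset_univ]
  exact Finset.sum_congr rfl fun h _ => Finset.prod_mul_distrib.symm

lemma bigT_one : bigT (fun i => (1 : Matrix (Fin (d i)) (Fin (d i)) ℂ)) = 1 := by
  ext f g
  simp only [bigT, of_apply, one_apply]
  by_cases h : f = g
  · subst h; simp
  · obtain ⟨i, hi⟩ := Function.ne_iff.mp h
    rw [if_neg h]
    exact Finset.prod_eq_zero (Finset.mem_univ i) (if_neg hi)

lemma bigT_conjTranspose (A : ∀ i, Matrix (Fin (d i)) (Fin (d i)) ℂ) :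
    (bigT A)ᴴ = bigT fun i => (A i)ᴴ := by
  ext f g
  simp only [bigT, conjTranspose_apply, of_apply, star_prod]

end TensorProduct

lemma sgn_false_eq_prod (μ : Fin 4 → Bool) : sgn false μ = ∏ j, if μ j then -1 else 1 := by
  rw [Finset.prod_ite, Finset.prod_const, Finset.prod_const_one, mul_one, neg_one_pow_eq_ite]
  rcases Nat.mod_two_eq_zero_or_one (Finset.univ.filter fun j => μ j = true).card with h | h <;>
    simp [sgn, Nat.even_iff, h]

lemma sgn_add (c : Bool) (α μ : Fin 4 → Bool) : sgn c (α + μ) = sgn c α * sgn c μ := by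
  cases c
  · simp only [sgn_false_eq_prod, ← Finset.prod_mul_distrib, Pi.add_apply, Bool.add_eq_xor]
    have hsign : ∀ x y : Bool, (if x ^^ y then -1 else 1 : ℂ) =
        (if x then -1 else 1) * if y then -1 else 1 := by
      intro x y; cases x <;> cases y <;> norm_num
    exact Finset.prod_congr rfl fun j _ => hsign (α j) (μ j)
  · simp [sgn]

lemma sgn_mul_self (c : Bool) (μ : Fin 4 → Bool) : sgn c μ * sgn c μ = 1 := by
  unfold sgn; split_ifs <;> norm_num

lemma star_sgn (c : Bool) (μ : Fin 4 → Bool) : star (sgn c μ) = sgn c μ := by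
  unfold sgn; split_ifs <;> simp

/-- Qubit `i` lies in the pair `{2j, 2j+1}`, `j = pairOf i`, on which `g_{j+3}` acts. -/
def pairOf (i : Fin 8) : Fin 4 := ⟨i / 2, by omega⟩

lemma quest_add (c : Bool) (α μ : Fin 4 → Bool) (i : Fin 8) :
    quest c (α + μ) i = α (pairOf i) + quest c μ i := by
  simp only [quest, pairOf, Pi.add_apply, Bool.add_eq_xor, Bool.xor_left_comm]

lemma mul_mul_add_eq_of_mul_eq_zero {R : Type*} [Monoid R] {f : Bool → R}
    (hf : ∀ x, f x * f x = 1) {a b : Bool} (hab : a * b = 0) (x : Bool) :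
    f (a + x) * f (a + b + x) * f (b + x) = f x := by
  cases a <;> cases b <;> cases x <;>
    simp_all [mul_assoc, Bool.add_eq_xor, Bool.mul_eq_and, Bool.zero_eq_false]

section Observables

variable {d : Fin 8 → ℕ} (Dh : ∀ i, Bool → Matrix (Fin (d i)) (Fin (d i)) ℂ)

noncomputable def stabObs (c : Bool) (μ : Fin 4 → Bool) :
    Matrix (∀ i, Fin (d i)) (∀ i, Fin (d i)) ℂ :=
  sgn c μ • bigT fun i => Dh i (quest c μ i)

variable {Dh}

lemma stabObs_conjTranspose_mul_self (hherm : ∀ i D, (Dh i D).IsHermitian)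
    (hunit : ∀ i D, Dh i D * Dh i D = 1) (c : Bool) (μ : Fin 4 → Bool) :
    (stabObs Dh c μ)ᴴ * stabObs Dh c μ = 1 := by
  have hself : (stabObs Dh c μ)ᴴ = stabObs Dh c μ := by
    simp only [stabObs, conjTranspose_smul, bigT_conjTranspose, star_sgn, (hherm _ _).eq]
  rw [hself, stabObs, smul_mul_smul_comm, sgn_mul_self, one_smul, bigT_mul]
  simp only [hunit, bigT_one]

lemma stabObs_add_mul_mul (hunit : ∀ i D, Dh i D * Dh i D = 1) (c : Bool)
    {α β : Fin 4 → Bool} (hαβ : α * β = 0) (μ : Fin 4 → Bool) :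
    stabObs Dh c (α + μ) * stabObs Dh c (α + β + μ) * stabObs Dh c (β + μ) = stabObs Dh c μ := by
  have hsgn : sgn c (α + μ) * sgn c (α + β + μ) * sgn c (β + μ) = sgn c μ := by
    simp only [sgn_add]
    linear_combination (sgn c β * sgn c β * sgn c μ * sgn c μ * sgn c μ) * sgn_mul_self c α +
      (sgn c μ * sgn c μ * sgn c μ) * sgn_mul_self c β + sgn c μ * sgn_mul_self c μ
  simp only [stabObs, smul_mul_smul_comm, hsgn, bigT_mul, quest_add, Pi.add_apply]
  congr 2
  funext i
  exact mul_mul_add_eq_of_mul_eq_zero (hunit i) (congrFun hαβ (pairOf i)) _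

end Observables

/-- The disjoint pairs `({0}, {1})`, `({2}, {3})`, `({0, 2}, {1, 3})` give triples covering nine
distinct nonzero shifts of `μ`. -/
lemma two_mul_le_sum_of_le_three_mul {δ : (Fin 4 → Bool) → ℝ} (hδ : ∀ m, 0 ≤ δ m)
    (htri : ∀ α β μ, α * β = 0 → δ μ ≤ 3 * (δ (α + μ) + δ (α + β + μ) + δ (β + μ)))
    (μ : Fin 4 → Bool) : 2 * δ μ ≤ ∑ m, δ m := by
  have h₁ := htri ![true, false, false, false] ![false, true, false, false] μ (by decide)
  have h₂ := htri ![false, false, true, false] ![false, false, false, true] μ (by decide)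
  have h₃ := htri ![true, false, true, false] ![false, true, false, true] μ (by decide)
  rw [show (![true, false, false, false] + ![false, true, false, false] : Fin 4 → Bool) =
    ![true, true, false, false] by decide] at h₁
  rw [show (![false, false, true, false] + ![false, false, false, true] : Fin 4 → Bool) =
    ![false, false, true, true] by decide] at h₂
  rw [show (![true, false, true, false] + ![false, true, false, true] : Fin 4 → Bool) =
    ![true, true, true, true] by decide] at h₃
  have hshift : ∑ m, δ m = ∑ m, δ (m + μ) := (Equiv.sum_comp (Equiv.addRight μ) δ).symm
  have hsub := Finset.sum_le_univ_sum_of_nonneg (f := fun m => δ (m + μ)) (fun m => hδ _)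
    (s := {0, ![true, false, false, false], ![false, true, false, false],
      ![true, true, false, false], ![false, false, true, false], ![false, false, false, true],
      ![false, false, true, true], ![true, false, true, false], ![false, true, false, true],
      ![true, true, true, true]})
  simp +decide only [Finset.sum_insert, Finset.mem_insert, Finset.mem_singleton,
    Finset.sum_singleton, zero_add] at hsub
  linarith

lemma gameValue_eq {d : Fin 8 → ℕ} (Dh : ∀ i, Bool → Matrix (Fin (d i)) (Fin (d i)) ℂ)
    {ρ : Matrix (∀ i, Fin (d i)) (∀ i, Fin (d i)) ℂ} (htr : ρ.trace = 1) :
    gameValue Dh ρ = 1 - (∑ c, ∑ μ, (1 - expect ρ (stabObs Dh c μ))) / 64 := by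
  have hterm : ∀ c μ, ((((2 : ℂ)⁻¹ • ((1 : Matrix (∀ i, Fin (d i)) (∀ i, Fin (d i)) ℂ) +
      sgn c μ • bigT fun i => Dh i (quest c μ i))) * ρ).trace).re =
      1 - (1 - expect ρ (stabObs Dh c μ)) / 2 := by
    intro c μ
    rw [smul_mul_assoc, trace_smul, add_mul, trace_add, one_mul, htr, smul_eq_mul,
      show (2 : ℂ)⁻¹ = ((2⁻¹ : ℝ) : ℂ) by norm_num, Complex.re_ofReal_mul, Complex.add_re,
      Complex.one_re, ← expect_apply, stabObs]
    ring
  simp only [gameValue, hterm, Finset.sum_sub_distrib, ← Finset.sum_div, Finset.sum_const,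
    Finset.card_univ, Fintype.card_bool, Fintype.card_fun, Fintype.card_fin]
  norm_num
  ring

/-- In the stabilizer game for the eight-qubit code: honest players sharing a state in
the code space win with probability `1` (and every strategy has value at most `1`, so
the nonlocal value is `1`); moreover any strategy of value at least `1 − ε` satisfies
`Re Tr((−1)^ν (⊗ᵢ D̂⁽ⁱ⁾) ρ) ≥ 1 − 32ε` for each stabilizer element of `Ξ`. -/
theorem stabilizer_game_rigidity :
    (∀ ρ : Matrix (∀ _ : Fin 8, Fin 2) (∀ _ : Fin 8, Fin 2) ℂ,
      ρ.PosSemidef → ρ.trace = 1 →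
      (∀ c μ, (sgn c μ • bigT (d := fun _ => 2) fun i => pmat (quest c μ i)) * ρ = ρ) →
      gameValue (d := fun _ => 2) (fun _ D => pmat D) ρ = 1) ∧
    (∀ (d : Fin 8 → ℕ) (Dh : ∀ i, Bool → Matrix (Fin (d i)) (Fin (d i)) ℂ)
        (ρ : Matrix (∀ i, Fin (d i)) (∀ i, Fin (d i)) ℂ),
      ρ.PosSemidef → ρ.trace = 1 →
      (∀ i D, (Dh i D).IsHermitian) → (∀ i D, Dh i D * Dh i D = 1) →
      (∀ i D, (Dh i D).trace = 0) →
      gameValue Dh ρ ≤ 1 ∧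
      ∀ ε : ℝ, 1 - ε ≤ gameValue Dh ρ →
        ∀ c μ, 1 - 32 * ε ≤
          (((sgn c μ • bigT fun i => Dh i (quest c μ i)) * ρ).trace).re) := by
  refine ⟨fun ρ _ htr hstab => ?_, fun d Dh ρ hρ htr hherm hunit _ => ?_⟩
  · have hfixed : ∀ c μ, expect ρ (stabObs (fun _ D => pmat D) c μ) = 1 := fun c μ => by
      rw [expect_apply, stabObs, hstab, htr, Complex.one_re]
    simp [gameValue_eq _ htr, hfixed]
  · have hrefl := stabObs_conjTranspose_mul_self hherm hunit
    have hdef : ∀ c μ, 0 ≤ 1 - expect ρ (stabObs Dh c μ) := fun c μ => by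
      linarith [expect_le_one hρ htr (hrefl c μ)]
    have htotal := Finset.sum_nonneg fun c (_ : c ∈ Finset.univ) =>
      Finset.sum_nonneg fun μ (_ : μ ∈ Finset.univ) => hdef c μ
    refine ⟨by rw [gameValue_eq Dh htr]; linarith, fun ε hε c μ => ?_⟩
    have hμ := two_mul_le_sum_of_le_three_mul (hdef c) (fun α β μ hαβ => by
      simpa only [stabObs_add_mul_mul hunit c hαβ μ] using
        one_sub_expect_mul_mul_le hρ htr (hrefl c (α + μ)) (hrefl c (α + β + μ))
          (hrefl c (β + μ))) μ
    have hc := Finset.single_le_sum (f := fun c => ∑ μ, (1 - expect ρ (stabObs Dh c μ)))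
      (fun c _ => Finset.sum_nonneg fun μ _ => hdef c μ) (Finset.mem_univ c)
    rw [gameValue_eq Dh htr] at hε
    change 1 - 32 * ε ≤ expect ρ (stabObs Dh c μ)
    linarith
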